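/- Let d ≥ 2 and let u : ℝ^d → ℝ^d and g : ℝ^d → ℝ be C^∞ maps such that 𝓔u(x) = 2 g(x) (e₁⊙e₁) = 2 g(x) (e₁⊗e₁) for all x ∈ ℝ^d. Then there exist C^∞ functions h : ℝ → ℝ and p_j : ℝ → ℝ (j = 2,…,d) such that 2 g(x) = h(x₁) + Σ_{j=2}^d x_j p_j(x₁) for all x ∈ ℝ^d; moreover there exist C^∞ functions H, 𝒫_j : ℝ → ℝ with H' = h and 𝒫_j'' = p_j, and a rigid deformation ω such that u(x) = e₁( H(x₁) + Σ_{j=2}^d x_j 𝒫_j'(x₁) ) − Σ_{j=2}^d e_j 𝒫_j(x₁) + ω(x) for all x, where x_j = x·e_j. -/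

import Mathlib

open scoped ContDiff

lemma clm_pi_eval {n : ℕ} (L : (Fin n → ℝ) →L[ℝ] ℝ) (v : Fin n → ℝ) :
    L v = ∑ j, v j * L (Pi.single j 1) := by
  have hv : v = ∑ j, v j • (Pi.single j 1 : Fin n → ℝ) := by
    funext k
    simp [Finset.sum_apply, Pi.single_apply]
  conv_lhs => rw [hv]
  rw [map_sum]
  simp [smul_eq_mul]

lemma master {n : ℕ} (e0 : Fin n) (φ : (Fin n → ℝ) → ℝ) (hφ : Differentiable ℝ φ)
    (ψ : Fin n → ℝ → ℝ)
    (hder : ∀ (y : Fin n → ℝ) (j : Fin n), j ≠ e0 →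
      fderiv ℝ φ y (Pi.single j 1) = ψ j (y e0))
    (x : Fin n → ℝ) :
    φ x = φ ((x e0) • (Pi.single e0 1 : Fin n → ℝ))
      + ∑ j ∈ Finset.univ.erase e0, x j * ψ j (x e0) := by
  set b : Fin n → ℝ := (x e0) • (Pi.single e0 1 : Fin n → ℝ) with hb
  set v : Fin n → ℝ := x - b with hvdef
  have hbj : ∀ j, j ≠ e0 → b j = 0 := by
    intro j hj; simp [hb, Pi.single_apply, hj.symm]
  have hbe : b e0 = x e0 := by simp [hb]
  have hv0 : v e0 = 0 := by simp [hvdef, hbe]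
  have hvj : ∀ j, j ≠ e0 → v j = x j := by
    intro j hj; simp [hvdef, hbj j hj]
  set C : ℝ := ∑ j ∈ Finset.univ.erase e0, x j * ψ j (x e0) with hC
  have key : ∀ y : Fin n → ℝ, y e0 = x e0 → fderiv ℝ φ y v = C := by
    intro y hy
    rw [clm_pi_eval (fderiv ℝ φ y) v, hC]
    rw [← Finset.sum_erase (h := by simp [hv0]) (s := Finset.univ) (f := fun j => v j * fderiv ℝ φ y (Pi.single j 1)) (a := e0)]
    apply Finset.sum_congr rfl
    intro j hj
    have hj' : j ≠ e0 := Finset.ne_of_mem_erase hj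
    rw [hder y j hj', hy, hvj j hj']
  have hγ : ∀ s : ℝ, HasDerivAt (fun s : ℝ => φ (b + s • v) - s * C) 0 s := by
    intro s
    have h1 : HasDerivAt (fun s : ℝ => b + s • v) v s := by
      simpa using ((hasDerivAt_id s).smul_const v).const_add b
    have h2 := (hφ (b + s • v)).hasFDerivAt.comp_hasDerivAt s h1
    have h3 : fderiv ℝ φ (b + s • v) v = C := by
      apply key; simp [hv0, hbe]
    rw [h3] at h2
    have h4 := h2.sub ((hasDerivAt_id s).mul_const C)
    simp only [one_mul, sub_self] at h4
    exact h4
  have hconst : ∀ s t : ℝ, (fun s : ℝ => φ (b + s • v) - s * C) s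
      = (fun s : ℝ => φ (b + s • v) - s * C) t := by
    intro s t
    exact is_const_of_deriv_eq_zero (fun z => (hγ z).differentiableAt)
      (fun z => (hγ z).deriv) s t
  have h01 := hconst 1 0
  simp only [one_smul, zero_smul, add_zero, one_mul, zero_mul, sub_zero] at h01
  have hbv : b + v = x := by simp [hvdef]
  rw [hbv] at h01
  linarith [h01]



/-- The symmetrized gradient `𝓔u(x) = (Du(x) + Du(x)ᵀ)/2`, where `(Du)_{ij} = ∂_j u_i`. -/
noncomputable def symGrad {d : ℕ} (u : (Fin d → ℝ) → (Fin d → ℝ)) (x : Fin d → ℝ) :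
    Matrix (Fin d) (Fin d) ℝ :=
  fun i j => (fderiv ℝ u x (Pi.single j 1) i + fderiv ℝ u x (Pi.single i 1) j) / 2

/-- Smooth rigidity for `P = e₁ ⊙ e₁`: if `𝓔u = 2g (e₁ ⊗ e₁)` with `u, g` smooth on
`ℝ^d`, `d ≥ 2`, then `2g(x) = h(x₁) + Σ_{j≥2} x_j p_j(x₁)` for smooth functions `h, p_j`,
and `u(x) = e₁(H(x₁) + Σ_{j≥2} x_j 𝒫_j'(x₁)) − Σ_{j≥2} e_j 𝒫_j(x₁) + ω(x)` with
`H' = h`, `𝒫_j'' = p_j` and `ω` a rigid deformation. -/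
theorem rigidity_e1_odot_e1 {d : ℕ} (hd : 2 ≤ d)
    (u : (Fin d → ℝ) → (Fin d → ℝ)) (g : (Fin d → ℝ) → ℝ)
    (hu : ContDiff ℝ (⊤ : ℕ∞) u) (hg : ContDiff ℝ (⊤ : ℕ∞) g)
    (h : ∀ x, symGrad u x =
      (2 * g x) • Matrix.single (⟨0, by omega⟩ : Fin d) (⟨0, by omega⟩ : Fin d) (1 : ℝ)) :
    ∃ (h' : ℝ → ℝ) (p : Fin d → ℝ → ℝ),
      ContDiff ℝ (⊤ : ℕ∞) h' ∧ (∀ j, ContDiff ℝ (⊤ : ℕ∞) (p j)) ∧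
      (∀ x : Fin d → ℝ,
        2 * g x = h' (x ⟨0, by omega⟩)
          + ∑ j ∈ Finset.univ.erase (⟨0, by omega⟩ : Fin d), x j * p j (x ⟨0, by omega⟩)) ∧
      ∃ (H : ℝ → ℝ) (P : Fin d → ℝ → ℝ),
        ContDiff ℝ (⊤ : ℕ∞) H ∧ (∀ j, ContDiff ℝ (⊤ : ℕ∞) (P j)) ∧
        deriv H = h' ∧ (∀ j, deriv (deriv (P j)) = p j) ∧
        ∃ (u₀ : Fin d → ℝ) (Ξ : Matrix (Fin d) (Fin d) ℝ), Ξ.transpose = -Ξ ∧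
          ∀ x : Fin d → ℝ,
            u x = (H (x ⟨0, by omega⟩)
                    + ∑ j ∈ Finset.univ.erase (⟨0, by omega⟩ : Fin d),
                        x j * deriv (P j) (x ⟨0, by omega⟩)) •
                    (Pi.single (⟨0, by omega⟩ : Fin d) 1 : Fin d → ℝ)
                - (∑ j ∈ Finset.univ.erase (⟨0, by omega⟩ : Fin d),
                    P j (x ⟨0, by omega⟩) • (Pi.single j 1 : Fin d → ℝ))
                + (u₀ + Ξ.mulVec x) := by
  have hd0 : 0 < d := by omega
  set i0 : Fin d := ⟨0, by omega⟩ with hi0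
  set e : Fin d → (Fin d → ℝ) := fun j => Pi.single j 1 with he
  have hud : Differentiable ℝ u := hu.differentiable (by simp)
  have hw : ContDiff ℝ (⊤ : ℕ∞) (fderiv ℝ u) := hu.fderiv_right (le_of_eq rfl)
  have hwd : Differentiable ℝ (fderiv ℝ u) := hw.differentiable (by simp)
  -- F1
  have F1 : ∀ (x : Fin d → ℝ) (i j : Fin d),
      fderiv ℝ u x (e j) i + fderiv ℝ u x (e i) j
        = if i = i0 ∧ j = i0 then 2 * (2 * g x) else 0 := by
    intro x i j
    have h0 := congrFun (congrFun (h x) i) j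
    simp only [symGrad, Matrix.smul_apply, Matrix.single, Matrix.of_apply,
      smul_eq_mul] at h0
    by_cases hij : i = i0 ∧ j = i0
    · obtain ⟨h1, h2⟩ := hij
      subst h1; subst h2
      simp only [and_self, if_true, eq_self_iff_true, true_and, if_pos] at h0 ⊢
      rw [div_eq_iff (by norm_num : (2:ℝ) ≠ 0)] at h0
      simp at h0 ⊢
      linarith
    · rw [if_neg hij]
      have : ¬ (i0 = i ∧ i0 = j) := fun ⟨a, b⟩ => hij ⟨a.symm, b.symm⟩
      rw [if_neg this, mul_zero] at h0
      rw [div_eq_iff (by norm_num : (2:ℝ) ≠ 0)] at h0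
      simpa using h0
  have F1off : ∀ (x : Fin d → ℝ) (i j : Fin d), ¬(i = i0 ∧ j = i0) →
      fderiv ℝ u x (e j) i + fderiv ℝ u x (e i) j = 0 := by
    intro x i j hij
    rw [F1 x i j, if_neg hij]
  have F1diag : ∀ x : Fin d → ℝ, fderiv ℝ u x (e i0) i0 = 2 * g x := by
    intro x
    have h2 := F1 x i0 i0
    simp only [and_self, if_true, eq_self_iff_true, if_pos] at h2
    linarith
  -- second derivative plumbing
  have hW : ∀ (a : Fin d → ℝ) (i : Fin d) (x : Fin d → ℝ),
      HasFDerivAt (fun y => fderiv ℝ u y a i)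
        ((((ContinuousLinearMap.proj i : (Fin d → ℝ) →L[ℝ] ℝ).comp
          (ContinuousLinearMap.apply ℝ (Fin d → ℝ) a)).comp
            (fderiv ℝ (fderiv ℝ u) x))) x := by
    intro a i x
    exact (((ContinuousLinearMap.proj i : (Fin d → ℝ) →L[ℝ] ℝ).comp
      (ContinuousLinearMap.apply ℝ (Fin d → ℝ) a)).hasFDerivAt).comp x (hwd x).hasFDerivAt
  have Wdiff : ∀ (a : Fin d → ℝ) (i : Fin d), Differentiable ℝ (fun y => fderiv ℝ u y a i) :=
    fun a i y => (hW a i y).differentiableAt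
  have S1 : ∀ (x a b : Fin d → ℝ),
      fderiv ℝ (fderiv ℝ u) x a b = fderiv ℝ (fderiv ℝ u) x b a := by
    intro x a b
    exact (hu.contDiffAt.isSymmSndFDerivAt (by rw [minSmoothness_of_isRCLikeNormedField]; exact WithTop.coe_le_coe.mpr le_top)) a b
  have S2 : ∀ (x : Fin d → ℝ) (i j : Fin d), ¬(i = i0 ∧ j = i0) → ∀ k : Fin d,
      fderiv ℝ (fderiv ℝ u) x (e k) (e j) i + fderiv ℝ (fderiv ℝ u) x (e k) (e i) j = 0 := by
    intro x i j hij k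
    have hfun : (fun y => fderiv ℝ u y (e j) i + fderiv ℝ u y (e i) j)
        = fun _ : Fin d → ℝ => (0:ℝ) := by
      funext y
      rw [F1 y i j, if_neg hij]
    have h1 := ((hW (e j) i x).add (hW (e i) j x))
    change HasFDerivAt (fun y => fderiv ℝ u y (e j) i + fderiv ℝ u y (e i) j) _ x at h1
    rw [hfun] at h1
    have h2 := h1.unique (hasFDerivAt_const (0:ℝ) x)
    have h3 := congrArg (fun L : (Fin d → ℝ) →L[ℝ] ℝ => L (e k)) h2
    simpa using h3
  have C1 : ∀ (x : Fin d → ℝ) (i k : Fin d), i ≠ i0 → k ≠ i0 → ∀ j : Fin d,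
      fderiv ℝ (fderiv ℝ u) x (e j) (e k) i = 0 := by
    intro x i k hi hk j
    have sym : ∀ a b c : Fin d,
        fderiv ℝ (fderiv ℝ u) x (e a) (e b) c = fderiv ℝ (fderiv ℝ u) x (e b) (e a) c :=
      fun a b c => congrFun (S1 x (e a) (e b)) c
    have h1 := S2 x i k (fun hh => hi hh.1) j
    have h2 := S2 x i j (fun hh => hi hh.1) k
    have h3 := S2 x k j (fun hh => hk hh.1) i
    have e1 := sym k j i
    have e2 := sym j i k
    have e3 := sym k i j
    have e4 := sym j k i
    linarith
  have C2 : ∀ (x : Fin d → ℝ) (i j : Fin d), i ≠ i0 → j ≠ i0 →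
      fderiv ℝ (fderiv ℝ u) x (e j) (e i0) i = 0 := by
    intro x i j hi hj
    have sym : ∀ a b c : Fin d,
        fderiv ℝ (fderiv ℝ u) x (e a) (e b) c = fderiv ℝ (fderiv ℝ u) x (e b) (e a) c :=
      fun a b c => congrFun (S1 x (e a) (e b)) c
    have h1 := S2 x i j (fun hh => hi hh.1) i0
    have h2 := S2 x i i0 (fun hh => hi hh.1) j
    have h3 := S2 x j i0 (fun hh => hj hh.1) i
    have e1 := sym j i0 i
    have e2 := sym i0 i j
    have e3 := sym j i i0
    have e4 := sym i0 j i
    have e5 := sym i i0 j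
    have e6 := sym i j i0
    linarith
  -- step 1 : transverse derivatives of u_i are constant
  have const1 : ∀ (i k : Fin d), i ≠ i0 → k ≠ i0 → ∀ x : Fin d → ℝ,
      fderiv ℝ u x (e k) i = fderiv ℝ u 0 (e k) i := by
    intro i k hi hk x
    apply is_const_of_fderiv_eq_zero (Wdiff (e k) i)
    intro y
    rw [(hW (e k) i y).fderiv]
    refine ContinuousLinearMap.ext fun v => ?_
    rw [clm_pi_eval]
    simp only [ContinuousLinearMap.comp_apply, ContinuousLinearMap.apply_apply,
      ContinuousLinearMap.proj_apply, ContinuousLinearMap.zero_apply]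
    refine Finset.sum_eq_zero fun j _ => ?_
    rw [show (Pi.single j 1 : Fin d → ℝ) = e j from rfl, C1 y i k hi hk j, mul_zero]
  -- step 2 : ∂_0 u_i depends only on x_0 (i ≠ i0)
  have dep2 : ∀ (i : Fin d), i ≠ i0 → ∀ x : Fin d → ℝ,
      fderiv ℝ u x (e i0) i = fderiv ℝ u ((x i0) • e i0) (e i0) i := by
    intro i hi x
    have hm := master i0 (fun y => fderiv ℝ u y (e i0) i) (Wdiff (e i0) i)
      (fun _ _ => 0) ?_ x
    · simpa using hm
    · intro y j hj
      rw [(hW (e i0) i y).fderiv]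
      simp only [ContinuousLinearMap.comp_apply, ContinuousLinearMap.apply_apply,
        ContinuousLinearMap.proj_apply]
      rw [show (Pi.single j 1 : Fin d → ℝ) = e j from rfl]
      exact C2 y i j hi hj
  -- coordinate functions
  have hudi : ∀ i : Fin d, Differentiable ℝ (fun x => u x i) := by
    intro i
    exact fun x => ((ContinuousLinearMap.proj i :
      (Fin d → ℝ) →L[ℝ] ℝ).hasFDerivAt.comp x (hud x).hasFDerivAt).differentiableAt
  have hcoord : ∀ (i : Fin d) (y v : Fin d → ℝ),
      fderiv ℝ (fun x => u x i) y v = fderiv ℝ u y v i := by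
    intro i y v
    have hL : HasFDerivAt (fun x => u x i)
        ((ContinuousLinearMap.proj i : (Fin d → ℝ) →L[ℝ] ℝ).comp (fderiv ℝ u y)) y :=
      (ContinuousLinearMap.proj i : (Fin d → ℝ) →L[ℝ] ℝ).hasFDerivAt.comp y (hud y).hasFDerivAt
    rw [hL.fderiv]
    rfl
  -- step 3
  have formula3 : ∀ (i : Fin d), i ≠ i0 → ∀ x : Fin d → ℝ,
      u x i = u ((x i0) • e i0) i
        + ∑ j ∈ Finset.univ.erase i0, x j * fderiv ℝ u 0 (e j) i := by
    intro i hi x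
    exact master i0 (fun y => u y i) (hudi i)
      (fun j => fun _ => fderiv ℝ u 0 (e j) i)
      (fun y j hj => by rw [hcoord i y (Pi.single j 1),
        show (Pi.single j 1 : Fin d → ℝ) = e j from rfl, const1 i j hi hj y]) x
  -- step 4
  have formula4 : ∀ x : Fin d → ℝ,
      u x i0 = u ((x i0) • e i0) i0
        + ∑ j ∈ Finset.univ.erase i0,
            x j * (-(fderiv ℝ u ((x i0) • e i0) (e i0) j)) := by
    intro x
    refine master i0 (fun y => u y i0) (hudi i0)
      (fun j => fun t => -(fderiv ℝ u (t • e i0) (e i0) j)) ?_ x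
    intro y j hj
    rw [hcoord i0 y (Pi.single j 1), show (Pi.single j 1 : Fin d → ℝ) = e j from rfl]
    have h1 := F1off y i0 j (fun hh => hj hh.2)
    have h2 := dep2 j hj y
    linarith
  -- one-variable functions
  set ℓ : ℝ → (Fin d → ℝ) := fun t => t • e i0 with hℓ
  have hℓsm : ContDiff ℝ (⊤ : ℕ∞) ℓ := contDiff_id.smul contDiff_const
  have hline : ∀ t : ℝ, HasDerivAt ℓ (e i0) t := by
    intro t
    simpa using (hasDerivAt_id t).smul_const (e i0)
  set H : ℝ → ℝ := fun t => u (ℓ t) i0 with hHdef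
  set P : Fin d → ℝ → ℝ := fun j t => -(u (ℓ t) j) with hPdef
  have hHsm : ContDiff ℝ (⊤ : ℕ∞) H := (contDiff_pi.mp (hu.comp hℓsm)) i0
  have hPsm : ∀ j, ContDiff ℝ (⊤ : ℕ∞) (P j) := fun j => ((contDiff_pi.mp (hu.comp hℓsm)) j).neg
  have derivCD : ∀ f : ℝ → ℝ, ContDiff ℝ (⊤ : ℕ∞) f → ContDiff ℝ (⊤ : ℕ∞) (deriv f) := fun f hf =>
    (contDiff_succ_iff_deriv.mp (show ContDiff ℝ (((⊤ : ℕ∞) : WithTop ℕ∞) + 1) f from hf.of_le (by exact_mod_cast le_top))).2.2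
  have hcomp : ∀ (j : Fin d) (t : ℝ),
      HasDerivAt (fun s => u (ℓ s) j) (fderiv ℝ u (ℓ t) (e i0) j) t := by
    intro j t
    have h1 := (hud (ℓ t)).hasFDerivAt.comp_hasDerivAt t (hline t)
    exact (ContinuousLinearMap.proj j : (Fin d → ℝ) →L[ℝ] ℝ).hasFDerivAt.comp_hasDerivAt t h1
  have hPder : ∀ (j : Fin d) (t : ℝ),
      HasDerivAt (P j) (-(fderiv ℝ u (ℓ t) (e i0) j)) t := fun j t => (hcomp j t).neg
  have hPderiv : ∀ j : Fin d, deriv (P j) = fun t => -(fderiv ℝ u (ℓ t) (e i0) j) :=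
    fun j => funext fun t => (hPder j t).deriv
  -- component formulas
  have comp0 : ∀ x : Fin d → ℝ, u x i0 = H (x i0)
      + ∑ j ∈ Finset.univ.erase i0, x j * deriv (P j) (x i0) := by
    intro x
    rw [formula4 x]
    have hHx : u ((x i0) • e i0) i0 = H (x i0) := rfl
    rw [hHx]
    congr 1
    refine Finset.sum_congr rfl fun j hj => ?_
    rw [hPderiv j]
  have compne : ∀ i : Fin d, i ≠ i0 → ∀ x : Fin d → ℝ,
      u x i = -(P i (x i0)) + ∑ j ∈ Finset.univ.erase i0, x j * fderiv ℝ u 0 (e j) i := by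
    intro i hi x
    rw [formula3 i hi x]
    congr 1
    simp [hPdef]
    rfl
  -- the g-formula
  have hg2 : ∀ x : Fin d → ℝ, 2 * g x = deriv H (x i0)
      + ∑ j ∈ Finset.univ.erase i0, x j * deriv (deriv (P j)) (x i0) := by
    intro x
    have hshift : HasDerivAt (fun t : ℝ => x + t • e i0) (e i0) 0 := by
      simpa using ((hasDerivAt_id (0:ℝ)).smul_const (e i0)).const_add x
    have hx0 : x + (0:ℝ) • e i0 = x := by simp
    have hLvec := (hud (x + (0:ℝ) • e i0)).hasFDerivAt.comp_hasDerivAt 0 hshift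
    rw [hx0] at hLvec
    have hL : HasDerivAt (fun t : ℝ => u (x + t • e i0) i0)
        (fderiv ℝ u x (e i0) i0) 0 := by
      have h2 := (ContinuousLinearMap.proj i0 :
        (Fin d → ℝ) →L[ℝ] ℝ).hasFDerivAt.comp_hasDerivAt 0
        (by exact hLvec :
          HasDerivAt (fun t : ℝ => u (x + t • e i0)) (fderiv ℝ u x (e i0)) 0)
      exact h2
    have hfun : (fun t : ℝ => u (x + t • e i0) i0)
        = fun t : ℝ => H (x i0 + t)
            + ∑ j ∈ Finset.univ.erase i0, x j * deriv (P j) (x i0 + t) := by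
      funext t
      rw [comp0 (x + t • e i0)]
      have hxi0 : (x + t • e i0) i0 = x i0 + t := by
        simp [he, Pi.single_apply]
      rw [hxi0]
      congr 1
      refine Finset.sum_congr rfl fun j hj => ?_
      have hj' : j ≠ i0 := Finset.ne_of_mem_erase hj
      have : (x + t • e i0) j = x j := by
        simp [he, Pi.single_apply, hj']
      rw [this]
    have hHd : HasDerivAt (fun t : ℝ => H (x i0 + t)) (deriv H (x i0)) 0 := by
      have h1 : HasDerivAt (fun t : ℝ => x i0 + t) 1 0 := (hasDerivAt_id 0).const_add (x i0)
      have h2 : HasDerivAt H (deriv H (x i0 + 0)) (x i0 + 0) :=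
        ((hHsm.differentiable (by simp)) (x i0 + 0)).hasDerivAt
      simpa [Function.comp_def] using h2.comp 0 h1
    have hPd : ∀ j : Fin d, HasDerivAt (fun t : ℝ => deriv (P j) (x i0 + t))
        (deriv (deriv (P j)) (x i0)) 0 := by
      intro j
      have h1 : HasDerivAt (fun t : ℝ => x i0 + t) 1 0 := (hasDerivAt_id 0).const_add (x i0)
      have h2 : HasDerivAt (deriv (P j)) (deriv (deriv (P j)) (x i0 + 0)) (x i0 + 0) :=
        (((derivCD _ (hPsm j)).differentiable (by simp)) (x i0 + 0)).hasDerivAt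
      simpa [Function.comp_def] using h2.comp 0 h1
    have hR : HasDerivAt (fun t : ℝ => H (x i0 + t)
        + ∑ j ∈ Finset.univ.erase i0, x j * deriv (P j) (x i0 + t))
        (deriv H (x i0) + ∑ j ∈ Finset.univ.erase i0,
          x j * deriv (deriv (P j)) (x i0)) 0 := by
      refine hHd.add ?_
      have := HasDerivAt.fun_sum (u := Finset.univ.erase i0)
        (A := fun j t => x j * deriv (P j) (x i0 + t))
        (A' := fun j => x j * deriv (deriv (P j)) (x i0))
        (fun j _ => (hPd j).const_mul (x j))
      simpa using this
    rw [← hfun] at hR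
    have huniq := hL.unique hR
    rw [← huniq, F1diag x]
  -- assembling the answer
  refine ⟨deriv H, fun j => deriv (deriv (P j)), derivCD H hHsm,
    fun j => derivCD _ (derivCD _ (hPsm j)), hg2, H, P, hHsm, hPsm, rfl, fun j => rfl,
    0, Matrix.of (fun i k => if i = i0 ∨ k = i0 then 0 else fderiv ℝ u 0 (e k) i), ?_, ?_⟩
  · ext i k
    simp only [Matrix.transpose_apply, Matrix.neg_apply, Matrix.of_apply]
    by_cases hik : i = i0 ∨ k = i0
    · rw [if_pos hik.symm, if_pos hik, neg_zero]
    · push_neg at hik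
      rw [if_neg (by tauto), if_neg (by tauto)]
      have := F1off 0 i k (fun hh => hik.1 hh.1)
      linarith
  · intro x
    funext i
    simp only [Pi.add_apply, Pi.sub_apply, Pi.smul_apply, smul_eq_mul, Finset.sum_apply,
      Pi.zero_apply, zero_add, Matrix.mulVec, dotProduct, Matrix.of_apply]
    by_cases hi : i = i0
    · subst hi
      rw [comp0 x]
      have hs1 : (Pi.single i0 1 : Fin d → ℝ) i0 = 1 := by simp
      have hs2 : ∑ j ∈ Finset.univ.erase i0, P j (x i0) * (Pi.single j 1 : Fin d → ℝ) i0 = 0 := by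
        refine Finset.sum_eq_zero fun j hj => ?_
        have hj' : j ≠ i0 := Finset.ne_of_mem_erase hj
        simp [Pi.single_apply, hj']
      have hs3 : ∑ k, (if i0 = i0 ∨ k = i0 then 0 else fderiv ℝ u 0 (e k) i0) * x k = 0 := by
        refine Finset.sum_eq_zero fun k _ => ?_
        rw [if_pos (Or.inl rfl), zero_mul]
      rw [hs1, hs2, hs3, mul_one, sub_zero, add_zero]
    · rw [compne i hi x]
      have hs1 : (Pi.single i0 1 : Fin d → ℝ) i = 0 := by simp [Pi.single_apply, hi]
      have hs2 : ∑ j ∈ Finset.univ.erase i0, P j (x i0) * (Pi.single j 1 : Fin d → ℝ) i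
          = P i (x i0) := by
        rw [Finset.sum_eq_single_of_mem i (Finset.mem_erase.mpr ⟨hi, Finset.mem_univ i⟩)]
        · simp
        · intro j hj hji
          simp [Pi.single_apply, hji.symm]
      have hs3 : ∑ k, (if i = i0 ∨ k = i0 then 0 else fderiv ℝ u 0 (e k) i) * x k
          = ∑ k ∈ Finset.univ.erase i0, x k * fderiv ℝ u 0 (e k) i := by
        rw [← Finset.sum_erase_add _ _ (Finset.mem_univ i0)]
        rw [if_pos (Or.inr rfl), zero_mul, add_zero]
        refine Finset.sum_congr rfl fun k hk => ?_
        have hk' : k ≠ i0 := Finset.ne_of_mem_erase hk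
        rw [if_neg (by tauto), mul_comm]
      rw [hs1, hs2, hs3, mul_zero, zero_sub]
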